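/- If M_m(b_1,...,b_m) = ±Id, then M_{n+m-2}((a_1,...,a_n) ⊕ (b_1,...,b_m)) = ±Id if and only if M_n(a_1,...,a_n) = ±Id. -/
import Mathlib


open Matrix

/-- `Mlist [a₁,…,aₙ] = M(aₙ)⋯M(a₁)` where `M(a) = [[a,-1],[1,0]]`. -/
def Mlist {A : Type*} [CommRing A] (l : List A) : Matrix (Fin 2) (Fin 2) A :=
  ((l.map (fun a => !![a, -1; 1, 0])).reverse).prod

/-- The continuant `K` (tridiagonal determinant), with `K [] = 1`. -/
def cont {A : Type*} [CommRing A] : List A → A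
  | [] => 1
  | [a] => a
  | a :: b :: l => a * cont (b :: l) - cont l

/-- `(a₁,…,aₙ) ⊕ (b₁,…,bₘ) = (a₁+bₘ, a₂,…,aₙ₋₁, aₙ+b₁, b₂,…,bₘ₋₁)` (for lists of length ≥ 2). -/
def oplus {A : Type*} [CommRing A] (la lb : List A) : List A :=
  match la, lb with
  | a1 :: ta, b1 :: tb =>
      (a1 + tb.getLastD b1) :: (ta.dropLast ++ ((ta.getLastD a1 + b1) :: tb.dropLast))
  | _, _ => []

section Aux
variable {A : Type*} [CommRing A]

def Mm (a : A) : Matrix (Fin 2) (Fin 2) A := !![a, -1; 1, 0]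
def Mi (a : A) : Matrix (Fin 2) (Fin 2) A := !![0, 1; -1, a]
def Nn : Matrix (Fin 2) (Fin 2) A := !![0, 1; -1, 0]

lemma Mlist_nil : Mlist ([] : List A) = 1 := rfl

lemma Mlist_cons (a : A) (l : List A) : Mlist (a :: l) = Mlist l * Mm a := by
  simp [Mlist, Mm]

lemma Mlist_append (l l' : List A) : Mlist (l ++ l') = Mlist l' * Mlist l := by
  simp [Mlist]

lemma Mm_add (x y : A) : Mm (x + y) = Mm y * (Nn * Mm x) := by
  ext i j
  fin_cases i <;> fin_cases j <;>
    simp [Mm, Nn, Matrix.mul_apply, Fin.sum_univ_two] <;> ring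

lemma Mi_Mm (a : A) (X : Matrix (Fin 2) (Fin 2) A) : Mi a * (Mm a * X) = X := by
  rw [← mul_assoc]
  have : Mi a * Mm a = 1 := by
    ext i j
    fin_cases i <;> fin_cases j <;>
      simp [Mm, Mi, Matrix.mul_apply, Fin.sum_univ_two]
  rw [this, one_mul]

lemma Mm_Mi (a : A) (X : Matrix (Fin 2) (Fin 2) A) : Mm a * (Mi a * X) = X := by
  rw [← mul_assoc]
  have : Mm a * Mi a = 1 := by
    ext i j
    fin_cases i <;> fin_cases j <;>
      simp [Mm, Mi, Matrix.mul_apply, Fin.sum_univ_two]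
  rw [this, one_mul]

lemma Mi_Mm' (a : A) : Mi a * Mm a = (1 : Matrix (Fin 2) (Fin 2) A) := by
  have := Mi_Mm a (1 : Matrix (Fin 2) (Fin 2) A); simpa using this

lemma Mm_Mi' (a : A) : Mm a * Mi a = (1 : Matrix (Fin 2) (Fin 2) A) := by
  have := Mm_Mi a (1 : Matrix (Fin 2) (Fin 2) A); simpa using this

lemma Nn_Nn (X : Matrix (Fin 2) (Fin 2) A) : Nn * (Nn * X) = -X := by
  rw [← mul_assoc]
  have : (Nn : Matrix (Fin 2) (Fin 2) A) * Nn = -1 := by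
    ext i j
    fin_cases i <;> fin_cases j <;>
      simp [Nn, Matrix.mul_apply, Fin.sum_univ_two]
  rw [this, neg_one_mul]

lemma Nn_Nn' : (Nn : Matrix (Fin 2) (Fin 2) A) * Nn = -1 := by
  have := Nn_Nn (1 : Matrix (Fin 2) (Fin 2) A); simpa using this

lemma key (a1 an b1 bm : A) (ta tb : List A) :
    Mlist (oplus (a1 :: (ta ++ [an])) (b1 :: (tb ++ [bm]))) =
      Mi bm * (Mlist (b1 :: (tb ++ [bm])) *
        (Nn * (Mlist (a1 :: (ta ++ [an])) * (Nn * Mm bm)))) := by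
  have h1 : oplus (a1 :: (ta ++ [an])) (b1 :: (tb ++ [bm])) =
      (a1 + bm) :: (ta ++ ((an + b1) :: tb)) := by
    simp [oplus]
  rw [h1, add_comm a1 bm]
  simp only [Mlist_cons, Mlist_append, Mlist_nil, Mm_add, one_mul, mul_one, mul_assoc,
    Mi_Mm, Mm_Mi]

lemma decomp (l : List A) (h : 2 ≤ l.length) : ∃ a t x, l = a :: (t ++ [x]) := by
  match l with
  | a :: t =>
    have ht : t ≠ [] := by
      intro e; subst e; simp at h
    obtain ⟨t', x, rfl⟩ := (List.eq_nil_or_concat t).resolve_left ht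
    exact ⟨a, t', x, by simp⟩
  | [] => simp at h

end Aux

theorem stmt9 {A : Type*} [CommRing A] (la lb : List A) (hla : 2 ≤ la.length)
    (hlb : 2 ≤ lb.length) (hb : Mlist lb = 1 ∨ Mlist lb = -1) :
    (Mlist (oplus la lb) = 1 ∨ Mlist (oplus la lb) = -1) ↔
      (Mlist la = 1 ∨ Mlist la = -1) := by
  obtain ⟨a1, ta, an, rfl⟩ := decomp la hla
  obtain ⟨b1, tb, bm, rfl⟩ := decomp lb hlb
  rcases hb with hb | hb <;> rw [key, hb] <;> constructor
  · rintro (h | h) <;>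
    · have h2 := congrArg
        (fun Y : Matrix (Fin 2) (Fin 2) A => Nn * (Mm bm * (Y * (Mi bm * Nn)))) h
      simp only [mul_assoc, Mm_Mi, Mi_Mm, Nn_Nn, Nn_Nn', Mi_Mm', Mm_Mi', mul_neg_one,
        neg_one_mul, one_mul, mul_one, neg_neg, mul_neg, neg_mul] at h2
      first
        | exact Or.inl h2 | exact Or.inr h2
        | exact Or.inl h2.symm | exact Or.inr h2.symm
        | exact Or.inl (neg_inj.mp h2) | exact Or.inr (neg_eq_iff_eq_neg.mp h2)
        | exact Or.inl (neg_inj.mp h2.symm) | exact Or.inr (neg_eq_iff_eq_neg.mp h2.symm)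
  · rintro (h | h) <;> rw [h] <;>
      simp only [mul_assoc, Mm_Mi, Mi_Mm, Nn_Nn, Nn_Nn', Mi_Mm', Mm_Mi', mul_neg_one,
        neg_one_mul, one_mul, mul_one, neg_neg, mul_neg, neg_mul] <;> tauto
  · rintro (h | h) <;>
    · have h2 := congrArg
        (fun Y : Matrix (Fin 2) (Fin 2) A => Nn * (Mm bm * (Y * (Mi bm * Nn)))) h
      simp only [mul_assoc, Mm_Mi, Mi_Mm, Nn_Nn, Nn_Nn', Mi_Mm', Mm_Mi', mul_neg_one,
        neg_one_mul, one_mul, mul_one, neg_neg, mul_neg, neg_mul] at h2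
      first
        | exact Or.inl h2 | exact Or.inr h2
        | exact Or.inl h2.symm | exact Or.inr h2.symm
        | exact Or.inl (neg_inj.mp h2) | exact Or.inr (neg_eq_iff_eq_neg.mp h2)
        | exact Or.inl (neg_inj.mp h2.symm) | exact Or.inr (neg_eq_iff_eq_neg.mp h2.symm)
  · rintro (h | h) <;> rw [h] <;>
      simp only [mul_assoc, Mm_Mi, Mi_Mm, Nn_Nn, Nn_Nn', Mi_Mm', Mm_Mi', mul_neg_one,
        neg_one_mul, one_mul, mul_one, neg_neg, mul_neg, neg_mul] <;> tauto
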